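/- In the Stackelberg model, maximizing x_f ↦ [expression] subject to the farmer's best response E_f(x_f) = (p_c ω k₁ H + μ_f V_f')/((1 − x_f)λ_f): the retailer's problem p_r D − (λ_r/2)E_r² − (x_f λ_f/2)E_f(x_f)² + V_r'(μ_f E_f(x_f) + μ_r E_r − δH) has first-order optimum x_f* = (2V_r' − V_f' − p_c ω k₁ H/μ_f)/(2V_r' + V_f' + p_c ω k₁ H/μ_f), provided the denominator is nonzero. -/

import Mathlib

/-!
Writing `α = (p_c ω k₁ H + μ_f V_f') / λ_f`, the farmer's best response is `E_f x = α / (1 - x)`,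
so up to a constant the retailer's objective is `a x / (1 - x)² + b / (1 - x)` with
`a = -λ_f α² / 2` and `b = V_r' μ_f α`. Its derivative `(a (1 + x) + b (1 - x)) / (1 - x)³`
vanishes at `x = (a + b) / (b - a)`, which after cancelling `α / 2` and `μ_f` is the claimed
subsidy ratio. When `α = 0` the objective is constant.
-/

theorem hasDerivAt_mul_div_one_sub_sq_add_div_one_sub (a b : ℝ) {x : ℝ} (hx : 1 - x ≠ 0) :
    HasDerivAt (fun y => a * y / (1 - y) ^ 2 + b / (1 - y))
      ((a * (1 + x) + b * (1 - x)) / (1 - x) ^ 3) x := by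
  have hden : HasDerivAt (fun y : ℝ => 1 - y) (-1) x := by
    simpa using (hasDerivAt_id' x).const_sub 1
  have hfirst := ((hasDerivAt_id' x).const_mul a).fun_div (hden.fun_pow 2) (pow_ne_zero 2 hx)
  have hsecond := (hasDerivAt_const x b).fun_div hden hx
  refine (hfirst.add hsecond).congr_deriv ?_
  field_simp
  ring

theorem hasDerivAt_zero_mul_div_one_sub_sq_add_div_one_sub {a b : ℝ} (ha : a ≠ 0)
    (hab : b - a ≠ 0) :
    HasDerivAt (fun x => a * x / (1 - x) ^ 2 + b / (1 - x)) 0 ((a + b) / (b - a)) := by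
  have hone_sub : 1 - (a + b) / (b - a) = -2 * a / (b - a) := by
    field_simp
    ring
  have hnumerator : a * (1 + (a + b) / (b - a)) + b * (1 - (a + b) / (b - a)) = 0 := by
    field_simp
    ring
  have hx0 : 1 - (a + b) / (b - a) ≠ 0 := by
    rw [hone_sub]
    exact div_ne_zero (mul_ne_zero (by norm_num) ha) hab
  simpa [hnumerator] using hasDerivAt_mul_div_one_sub_sq_add_div_one_sub a b hx0

theorem stackelberg_subsidy_first_order_condition_general
    (p_r D p_c ω k₁ H μ_f μ_r E_r δ lam_f lam_r Vf' Vr' : ℝ)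
    (hμf : μ_f ≠ 0)
    (hden : 2 * Vr' + Vf' + p_c * ω * k₁ * H / μ_f ≠ 0)
    (E_f : ℝ → ℝ)
    (hEf : ∀ x_f, E_f x_f = (p_c * ω * k₁ * H + μ_f * Vf') / ((1 - x_f) * lam_f))
    (R : ℝ → ℝ)
    (hR : ∀ x_f, R x_f = p_r * D - lam_r / 2 * E_r ^ 2 - x_f * lam_f / 2 * (E_f x_f) ^ 2
        + Vr' * (μ_f * E_f x_f + μ_r * E_r - δ * H)) :
    HasDerivAt R 0
      ((2 * Vr' - Vf' - p_c * ω * k₁ * H / μ_f)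
        / (2 * Vr' + Vf' + p_c * ω * k₁ * H / μ_f)) := by
  generalize p_c * ω * k₁ * H = K at hden hEf ⊢
  obtain ⟨α, hα_def⟩ : ∃ α, (K + μ_f * Vf') / lam_f = α := ⟨_, rfl⟩
  have hE : ∀ x, E_f x = α / (1 - x) := fun x => by
    rw [hEf, mul_comm (1 - x), ← div_div, hα_def]
  set c := p_r * D - lam_r / 2 * E_r ^ 2 + Vr' * (μ_r * E_r - δ * H)
  by_cases hα : α = 0
  · have hRc : R = fun _ => c := funext fun x => by simp [hR, hE, hα, c]
    exact hRc ▸ hasDerivAt_const _ c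
  have hlam : lam_f ≠ 0 := by rintro rfl; simp [← hα_def] at hα
  have hVf : Vf' = (lam_f * α - K) / μ_f := by rw [← hα_def]; field_simp; ring
  subst hVf
  set a := -(lam_f * α ^ 2 / 2)
  set b := Vr' * μ_f * α
  have hRab : R = fun x => c + (a * x / (1 - x) ^ 2 + b / (1 - x)) :=
    funext fun x => by rw [hR, hE, div_pow]; simp only [a, b, c]; ring
  have ha : a ≠ 0 := by simp [a, hlam, hα]
  have hab : b - a = α / 2 * μ_f * (2 * Vr' + (lam_f * α - K) / μ_f + K / μ_f) := by
    simp only [a, b]; field_simp; ring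
  have hab0 : b - a ≠ 0 := by rw [hab]; simp [hα, hμf, hden]
  have hx : (2 * Vr' - (lam_f * α - K) / μ_f - K / μ_f) /
      (2 * Vr' + (lam_f * α - K) / μ_f + K / μ_f) = (a + b) / (b - a) := by
    rw [div_eq_div_iff hden hab0, hab]; simp only [a, b]; field_simp; ring
  rw [hx, hRab]
  exact (hasDerivAt_zero_mul_div_one_sub_sq_add_div_one_sub ha hab0).const_add c

theorem stackelberg_subsidy_first_order_condition
    (p_r D p_c ω k₁ H μ_f μ_r E_r δ lam_f lam_r Vf' Vr' : ℝ)
    (hlamf : 0 < lam_f) (hμf : μ_f ≠ 0)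
    (hden : 2 * Vr' + Vf' + p_c * ω * k₁ * H / μ_f ≠ 0)
    (E_f : ℝ → ℝ)
    (hEf : ∀ x_f, E_f x_f = (p_c * ω * k₁ * H + μ_f * Vf') / ((1 - x_f) * lam_f))
    (R : ℝ → ℝ)
    (hR : ∀ x_f, R x_f = p_r * D - lam_r / 2 * E_r ^ 2 - x_f * lam_f / 2 * (E_f x_f) ^ 2
        + Vr' * (μ_f * E_f x_f + μ_r * E_r - δ * H)) :
    HasDerivAt R 0
      ((2 * Vr' - Vf' - p_c * ω * k₁ * H / μ_f)
        / (2 * Vr' + Vf' + p_c * ω * k₁ * H / μ_f)) :=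
  stackelberg_subsidy_first_order_condition_general p_r D p_c ω k₁ H μ_f μ_r E_r δ lam_f lam_r Vf'
    Vr' hμf hden E_f hEf R hR
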